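/- In a Jordan algebra over a field of characteristic not 2, the quadratic representation satisfies Q_{a^2} = Q_a^2 for every a. -/

import Mathlib

/-!
Write `T_x` for multiplication by `x`. Polarizing the Jordan identity in `a` (which needs `2 ≠ 0`)
expresses `T_{a a²}` and `T_{a² a²}` as polynomials in the commuting operators `T_a` and `T_{a²}`:
`T_{a a²} = 3 T_{a²} T_a - 2 T_a³` and `T_{a² a²} = T_{a²}² + 4 T_a² T_{a²} - 4 T_a⁴`.
Then `Q_{a²} = 2 T_{a²}² - T_{a² a²} = (2 T_a² - T_{a²})² = Q_a²`.
-/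

namespace JordanBilinear

variable {F V : Type*} [Field F] [AddCommGroup V] [Module F V] (mul : V →ₗ[F] V →ₗ[F] V)
  (comm : ∀ a b : V, mul a b = mul b a)
  (jordan : ∀ a b : V, mul a (mul b (mul a a)) = mul (mul a b) (mul a a))

include comm jordan

theorem jordan_linearized (h2 : (2 : F) ≠ 0) (a b c : V) :
    mul c (mul b (mul a a)) + (2 : F) • mul a (mul b (mul a c)) =
      mul (mul c b) (mul a a) + (2 : F) • mul (mul a b) (mul a c) := by
  have hplus := jordan (a + c) b
  have hminus := jordan (a - c) b
  have hc := jordan c b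
  simp only [map_add, map_sub, LinearMap.add_apply, LinearMap.sub_apply] at hplus hminus
  have hca := comm c a
  apply smul_right_injective V h2
  linear_combination (norm := module) hplus - hminus - (2 : F) • hc
    - (2 : F) • congrArg (fun x => mul a (mul b x)) hca
    + (2 : F) • congrArg (fun x => mul (mul a b) x) hca

theorem commute_mul_mul_self (a : V) : Commute (mul a) (mul (mul a a)) := by
  refine LinearMap.ext fun x => ?_
  have h := jordan a x
  rwa [comm x (mul a a), comm (mul a x) (mul a a)] at h

theorem mul_cube_eq (h2 : (2 : F) ≠ 0) (a : V) :
    mul (mul a (mul a a)) = (3 : F) • (mul (mul a a) * mul a) - (2 : F) • mul a ^ 3 := by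
  ext c
  have h := jordan_linearized mul comm jordan h2 a a c
  rw [comm (mul c a) (mul a a), comm c a, comm c (mul a (mul a a))] at h
  simp only [LinearMap.sub_apply, LinearMap.smul_apply, Module.End.mul_apply, pow_succ, pow_zero,
    Module.End.one_apply]
  linear_combination (norm := module) h

theorem mul_sq_sq_eq (h2 : (2 : F) ≠ 0) (a : V) :
    mul (mul (mul a a) (mul a a)) =
      mul (mul a a) ^ 2 + (4 : F) • (mul a ^ 2 * mul (mul a a)) - (4 : F) • mul a ^ 4 := by
  ext b
  have h := jordan_linearized mul comm jordan h2 a (mul a a) b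
  have hcube := LinearMap.congr_fun (mul_cube_eq mul comm jordan h2 a) (mul a b)
  have hcomm := commute_mul_mul_self mul comm jordan a
  have hcomm₁ := LinearMap.congr_fun hcomm (mul a b)
  have hcomm₂ := LinearMap.congr_fun (hcomm.pow_left 2) b
  rw [comm b (mul (mul a a) (mul a a)), comm (mul b (mul a a)) (mul a a), comm b (mul a a)] at h
  simp only [LinearMap.add_apply, LinearMap.sub_apply, LinearMap.smul_apply, Module.End.mul_apply,
    pow_succ, pow_zero, Module.End.one_apply] at h hcube hcomm₁ hcomm₂ ⊢
  rw [hcube, hcomm₁] at h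
  rw [hcomm₂]
  linear_combination (norm := module) h

end JordanBilinear

open JordanBilinear in
theorem stmt10 {F V : Type*} [Field F] (h2 : (2 : F) ≠ 0)
    [AddCommGroup V] [Module F V]
    (mul : V →ₗ[F] V →ₗ[F] V)
    (comm : ∀ a b : V, mul a b = mul b a)
    (jordan : ∀ a b : V, mul a (mul b (mul a a)) = mul (mul a b) (mul a a))
    (Q : V → Module.End F V)
    (hQ : ∀ a : V, Q a = 2 • (mul a * mul a) - mul (mul a a)) :
    ∀ a : V, Q (mul a a) = (Q a) ^ 2 := by
  intro a
  have hcomm : Commute (2 • mul a ^ 2) (mul (mul a a)) :=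
    ((commute_mul_mul_self mul comm jordan a).pow_left 2).smul_left 2
  rw [hQ, hQ, ← sq (mul a), mul_sq_sq_eq mul comm jordan h2 a, hcomm.sub_sq, two_mul, ← sq]
  simp only [smul_pow, ← pow_mul, add_mul, smul_mul_assoc]
  module
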